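/- Let h : ℝ^m → ℝ be continuously differentiable such that for all y, z ∈ ℝ^m, ‖∇h(y) − ∇h(z)‖ ≤ L‖y − z‖ and ⟨∇h(y) − ∇h(z), y − z⟩ ≥ μ‖y − z‖², where 0 < μ < L. Then for all x, y ∈ ℝ^m: h(x) ≥ h(y) + ⟨∇h(y), x − y⟩ + (1/(2(1 − μ/L)))·((1/L)‖∇h(x) − ∇h(y)‖² + μ‖x − y‖² − 2(μ/L)⟨∇h(y) − ∇h(x), y − x⟩). -/

import Mathlib

/-!
Integrating the derivative of `h` along segments, strong monotonicity and Lipschitz continuity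
of `∇h` give the quadratic bounds
`h y + ⟪∇h y, x - y⟫ + μ/2 ‖x - y‖² ≤ h x ≤ h y + ⟪∇h y, x - y⟫ + L/2 ‖x - y‖²`.
Chaining the lower bound at `(z, y)` with the upper bound at `(z, x)`, for the point
`z = x - (∇h x - ∇h y - μ (x - y)) / (L - μ)` that makes the chain tightest, gives
`h x ≥ h y + ⟪∇h y, x - y⟫ + μ/2 ‖x - y‖² + ‖∇h x - ∇h y - μ (x - y)‖² / (2 (L - μ))`,
which is the claimed inequality after expanding the square.
-/

open scoped RealInnerProductSpace

open Set

theorem add_add_div_two_le_of_hasDerivAt {f f' : ℝ → ℝ} {c : ℝ}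
    (hf : ∀ t ∈ Icc (0 : ℝ) 1, HasDerivAt f (f' t) t)
    (hf' : ∀ t ∈ Ioo (0 : ℝ) 1, f' 0 + c * t ≤ f' t) :
    f 0 + f' 0 + c / 2 ≤ f 1 := by
  set ψ : ℝ → ℝ := fun t => f t - t * f' 0 - c * t ^ 2 / 2
  have hψ : ∀ t ∈ Icc (0 : ℝ) 1, HasDerivAt ψ (f' t - f' 0 - c * t) t := fun t ht => by
    refine (((hf t ht).sub ((hasDerivAt_id' t).mul_const (f' 0))).sub
      (((hasDerivAt_pow 2 t).const_mul c).div_const 2)).congr_deriv ?_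
    ring
  have hmono : MonotoneOn ψ (Icc 0 1) := by
    refine monotoneOn_of_hasDerivWithinAt_nonneg (convex_Icc 0 1)
      (fun t ht => (hψ t ht).continuousAt.continuousWithinAt)
      (fun t ht => (hψ t (interior_subset ht)).hasDerivWithinAt) fun t ht => ?_
    rw [interior_Icc] at ht
    linarith [hf' t ht]
  have := hmono (left_mem_Icc.2 zero_le_one) (right_mem_Icc.2 zero_le_one) zero_le_one
  simp only [ψ] at this
  linarith

theorem le_add_add_div_two_of_hasDerivAt {f f' : ℝ → ℝ} {c : ℝ}
    (hf : ∀ t ∈ Icc (0 : ℝ) 1, HasDerivAt f (f' t) t)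
    (hf' : ∀ t ∈ Ioo (0 : ℝ) 1, f' t ≤ f' 0 + c * t) :
    f 1 ≤ f 0 + f' 0 + c / 2 := by
  have := add_add_div_two_le_of_hasDerivAt (f := -f) (f' := -f') (c := -c)
    (fun t ht => (hf t ht).neg) fun t ht => by simp only [Pi.neg_apply]; linarith [hf' t ht]
  simp only [Pi.neg_apply] at this
  linarith

section InnerProductSpace

variable {E : Type*} [NormedAddCommGroup E] [InnerProductSpace ℝ E]

theorem lower_bound_of_quadratic_bounds {f : E → ℝ} {g : E → E} {μ L : ℝ} (hμL : μ < L)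
    (hlow : ∀ x y, f y + ⟪g y, x - y⟫ + μ / 2 * ‖x - y‖ ^ 2 ≤ f x)
    (hup : ∀ x y, f x ≤ f y + ⟪g y, x - y⟫ + L / 2 * ‖x - y‖ ^ 2) (x y : E) :
    f y + ⟪g y, x - y⟫ + μ / 2 * ‖x - y‖ ^ 2
      + ‖g x - g y - μ • (x - y)‖ ^ 2 / (2 * (L - μ)) ≤ f x := by
  set d := g x - g y - μ • (x - y)
  set z := x - (L - μ)⁻¹ • d
  have hκ : L - μ ≠ 0 := sub_ne_zero.2 hμL.ne'
  have h₁ := hlow z y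
  have h₂ := hup z x
  have hzy : z - y = (x - y) - (L - μ)⁻¹ • d := by simp only [z]; abel
  have hzx : z - x = -((L - μ)⁻¹ • d) := by simp only [z]; abel
  have hgd : ⟪g x - g y, d⟫ = ‖d‖ ^ 2 + μ * ⟪x - y, d⟫ := by
    rw [show g x - g y = d + μ • (x - y) by simp [d], inner_add_left, real_inner_smul_left,
      real_inner_self_eq_norm_sq]
  rw [hzy, inner_sub_right, inner_smul_right, norm_sub_sq_real, inner_smul_right, norm_smul,
    mul_pow, Real.norm_eq_abs, sq_abs] at h₁
  rw [hzx, inner_neg_right, inner_smul_right, norm_neg, norm_smul, mul_pow, Real.norm_eq_abs,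
    sq_abs] at h₂
  have hgap : (L - μ)⁻¹ * ⟪g x, d⟫ - (L - μ)⁻¹ * ⟪g y, d⟫ - μ * ((L - μ)⁻¹ * ⟪x - y, d⟫)
      - (L - μ) / 2 * ((L - μ)⁻¹ ^ 2 * ‖d‖ ^ 2) = ‖d‖ ^ 2 / (2 * (L - μ)) := by
    rw [← mul_sub, ← inner_sub_left, hgd]
    field_simp
    ring
  linarith

variable [CompleteSpace E]

theorem DifferentiableAt.hasDerivAt_comp_add_smul {f : E → ℝ} {y u : E} {t : ℝ}
    (hf : DifferentiableAt ℝ f (y + t • u)) :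
    HasDerivAt (fun s : ℝ => f (y + s • u)) ⟪gradient f (y + t • u), u⟫ t := by
  have hline : HasDerivAt (fun s : ℝ => y + s • u) u t := by
    simpa using ((hasDerivAt_id t).smul_const u).const_add y
  exact hf.hasGradientAt.hasFDerivAt.comp_hasDerivAt t hline

theorem lower_quadratic_bound_of_strongMonotone_gradient {f : E → ℝ} {μ : ℝ}
    (hf : Differentiable ℝ f)
    (hμ : ∀ y z, μ * ‖y - z‖ ^ 2 ≤ ⟪gradient f y - gradient f z, y - z⟫) (x y : E) :
    f y + ⟪gradient f y, x - y⟫ + μ / 2 * ‖x - y‖ ^ 2 ≤ f x := by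
  have := add_add_div_two_le_of_hasDerivAt (f := fun t => f (y + t • (x - y)))
    (c := μ * ‖x - y‖ ^ 2) (fun t _ => (hf _).hasDerivAt_comp_add_smul) fun t ht => by
      have hsm := hμ (y + t • (x - y)) y
      rw [add_sub_cancel_left, inner_smul_right, inner_sub_left, norm_smul, mul_pow,
        Real.norm_eq_abs, sq_abs] at hsm
      simp only [zero_smul, add_zero]
      nlinarith [ht.1]
  simp only [zero_smul, add_zero, one_smul, add_sub_cancel] at this
  linarith

theorem upper_quadratic_bound_of_lipschitz_gradient {f : E → ℝ} {L : ℝ}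
    (hf : Differentiable ℝ f)
    (hL : ∀ y z, ‖gradient f y - gradient f z‖ ≤ L * ‖y - z‖) (x y : E) :
    f x ≤ f y + ⟪gradient f y, x - y⟫ + L / 2 * ‖x - y‖ ^ 2 := by
  have := le_add_add_div_two_of_hasDerivAt (f := fun t => f (y + t • (x - y)))
    (c := L * ‖x - y‖ ^ 2) (fun t _ => (hf _).hasDerivAt_comp_add_smul) fun t ht => by
      have hlip := hL (y + t • (x - y)) y
      rw [add_sub_cancel_left, norm_smul, Real.norm_eq_abs, abs_of_pos ht.1] at hlip
      have hcs := real_inner_le_norm (gradient f (y + t • (x - y)) - gradient f y) (x - y)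
      rw [inner_sub_left] at hcs
      simp only [zero_smul, add_zero]
      nlinarith [mul_le_mul_of_nonneg_right hlip (norm_nonneg (x - y))]
  simp only [zero_smul, add_zero, one_smul, add_sub_cancel] at this
  linarith

end InnerProductSpace

/-- **Interpolability inequality.** If `h : ℝᵐ → ℝ` is continuously differentiable with
`L`-Lipschitz and `μ`-strongly monotone gradient (`0 < μ < L`), then for all `x, y`:
`h(x) ≥ h(y) + ⟨∇h(y), x − y⟩ + (1/(2(1 − μ/L)))((1/L)‖∇h(x) − ∇h(y)‖² + μ‖x − y‖²
− 2(μ/L)⟨∇h(y) − ∇h(x), y − x⟩)`. -/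
theorem interpolability_inequality
    {m : ℕ} (μ L : ℝ) (hμ : 0 < μ) (hμL : μ < L)
    (h : EuclideanSpace ℝ (Fin m) → ℝ) (hh : ContDiff ℝ 1 h)
    (hLip : ∀ y z : EuclideanSpace ℝ (Fin m),
      ‖gradient h y - gradient h z‖ ≤ L * ‖y - z‖)
    (hSC : ∀ y z : EuclideanSpace ℝ (Fin m),
      ⟪gradient h y - gradient h z, y - z⟫ ≥ μ * ‖y - z‖ ^ 2) :
    ∀ x y : EuclideanSpace ℝ (Fin m),
      h x ≥ h y + ⟪gradient h y, x - y⟫ + (1 / (2 * (1 - μ / L))) *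
        ((1 / L) * ‖gradient h x - gradient h y‖ ^ 2 + μ * ‖x - y‖ ^ 2
          - 2 * (μ / L) * ⟪gradient h y - gradient h x, y - x⟫) := by
  intro x y
  have hd := hh.differentiable one_ne_zero
  have hbound := lower_bound_of_quadratic_bounds hμL
    (lower_quadratic_bound_of_strongMonotone_gradient hd hSC)
    (upper_quadratic_bound_of_lipschitz_gradient hd hLip) x y
  rw [norm_sub_sq_real (gradient h x - gradient h y), inner_smul_right, norm_smul, mul_pow,
    Real.norm_eq_abs, sq_abs] at hbound
  rw [← inner_neg_neg (gradient h y - gradient h x), neg_sub, neg_sub]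
  have hL : L ≠ 0 := (hμ.trans hμL).ne'
  have hLμ : L - μ ≠ 0 := sub_ne_zero.2 hμL.ne'
  have hcoeff : (1 / (2 * (1 - μ / L))) *
      ((1 / L) * ‖gradient h x - gradient h y‖ ^ 2 + μ * ‖x - y‖ ^ 2
        - 2 * (μ / L) * ⟪gradient h x - gradient h y, x - y⟫)
      = μ / 2 * ‖x - y‖ ^ 2 + (‖gradient h x - gradient h y‖ ^ 2
        - 2 * (μ * ⟪gradient h x - gradient h y, x - y⟫) + μ ^ 2 * ‖x - y‖ ^ 2)
        / (2 * (L - μ)) := by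
    field_simp
    ring
  linarith
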